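/- arXiv:math/0511498 — 5 statements merged into one kernel-verified Lean document; each statement's English description precedes it below -/
import Mathlib

section
/- Let 𝔫 be a finite-dimensional nilpotent Lie algebra whose center 𝔷 is one-dimensional, and suppose the first term 𝔫₁ of the upper central series (the preimage in 𝔫 of the center of 𝔫/𝔷) has one-dimensional center. Then 𝔫 = 𝔫₁ + z_𝔫(𝔫₁) and 𝔫₁ ∩ z_𝔫(𝔫₁) = 𝔷, where z_𝔫(𝔫₁) denotes the centralizer of 𝔫₁ in 𝔫. -/
/-!
Bracketing with `x ∈ 𝔫` gives a linear map `ad x|𝔫₁ : 𝔫₁ → 𝔷`, and it vanishes on the centre of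
`𝔫₁`, which is `𝔷` by the dimension hypotheses. On `𝔫₁` itself `a ↦ ad a|𝔫₁` is alternating with
kernel `𝔷`, so its image has dimension `dim 𝔫₁ - 1`; this is also the dimension of the space of
all maps `𝔫₁ → 𝔷` killing `𝔷`, because `𝔷` is a line. Hence `ad x|𝔫₁ = ad a|𝔫₁` for some
`a ∈ 𝔫₁`, and `x - a` centralises `𝔫₁`.
-/

open Module LinearMap

section LinearAlgebra

variable {K V L : Type*} [Field K] [AddCommGroup V] [Module K V] [FiniteDimensional K V]
  [AddCommGroup L] [Module K L] [FiniteDimensional K L]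

theorem LinearMap.finrank_ker_lcomp_subtype_add (U : Submodule K V) :
    finrank K (ker (lcomp K L U.subtype)) + finrank K U * finrank K L =
      finrank K V * finrank K L := by
  have hsurj : range (lcomp K L U.subtype) = ⊤ :=
    range_eq_top.mpr fun f ↦ LinearMap.exists_extend f
  have := finrank_range_add_finrank_ker (lcomp K L U.subtype)
  rw [hsurj, finrank_top, finrank_linearMap, finrank_linearMap] at this
  omega

theorem LinearMap.IsRefl.range_eq_ker_lcomp_subtype_ker {T : V →ₗ[K] V →ₗ[K] L} (hT : T.IsRefl)
    (hL : finrank K L = 1) : range T = ker (lcomp K L (ker T).subtype) := by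
  refine Submodule.eq_of_le_of_finrank_eq ?_ ?_
  · rintro _ ⟨x, rfl⟩
    ext ⟨y, hy⟩
    exact hT y x (LinearMap.congr_fun (mem_ker.mp hy) x)
  · have := finrank_range_add_finrank_ker T
    have := finrank_ker_lcomp_subtype_add (L := L) (ker T)
    rw [hL] at this
    omega

end LinearAlgebra

theorem LieAlgebra.exists_sub_lie_eq_zero_of_lie_mem_of_finrank_eq_one
    {F N : Type*} [Field F] [LieRing N] [LieAlgebra F N]
    {I L : Submodule F N} [FiniteDimensional F I] (hL : finrank F L = 1)
    (hIL : ∀ x : N, ∀ y ∈ I, ⁅x, y⁆ ∈ L)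
    (hcent : ∀ c ∈ I, (∀ y ∈ I, ⁅c, y⁆ = 0) → ∀ x : N, ⁅x, c⁆ = 0) (x : N) :
    ∃ a ∈ I, ∀ y ∈ I, ⁅x - a, y⁆ = 0 := by
  have : FiniteDimensional F L := Module.finite_of_finrank_eq_succ hL
  let Φ : N →ₗ[F] I →ₗ[F] L :=
    codRestrict₂ ((LieModule.toEnd F N N : N →ₗ[F] Module.End F N).domRestrict₂ I) L.subtype
      L.injective_subtype (fun x y ↦ by rw [Submodule.range_subtype]; exact hIL x y y.2)
  have hΦ (x : N) (y : I) : (Φ x y : N) = ⁅x, (y : N)⁆ :=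
    codRestrict₂_apply (i := L.subtype) _ _ _ x y
  have hT : (Φ.domRestrict I).IsRefl := by
    refine IsAlt.isRefl fun y ↦ ?_
    ext
    simp [hΦ]
  have hxT : Φ x ∈ range (Φ.domRestrict I) := by
    rw [hT.range_eq_ker_lcomp_subtype_ker hL]
    ext ⟨c, hc⟩
    have hc_comm (y : N) (hy : y ∈ I) : ⁅(c : N), y⁆ = 0 := by
      simpa [hΦ] using congr(($(mem_ker.mp hc) ⟨y, hy⟩ : N))
    simpa [hΦ] using hcent c c.2 hc_comm x
  obtain ⟨a, ha⟩ := hxT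
  refine ⟨a, a.2, fun y hy ↦ ?_⟩
  rw [sub_lie, sub_eq_zero, ← hΦ x ⟨y, hy⟩, ← ha, domRestrict_apply, hΦ]

theorem nilpotent_sum_of_firstUpperCentral_centralizer_general
    (F : Type*) [Field F]
    (N : Type*) [LieRing N] [LieAlgebra F N] [Module.Finite F N]
    -- the centre 𝔷
    (z : Submodule F N) (hz : ∀ x : N, x ∈ z ↔ ∀ y : N, ⁅x, y⁆ = 0)
    (hz1 : Module.finrank F z = 1)
    -- 𝔫₁ : the preimage in 𝔫 of the centre of 𝔫/𝔷
    (n1 : LieIdeal F N) (hn1 : ∀ x : N, x ∈ n1 ↔ ∀ y : N, ⁅x, y⁆ ∈ z)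
    -- the centraliser z_𝔫(𝔫₁) of 𝔫₁ in 𝔫
    (zc : Submodule F N) (hzc : ∀ x : N, x ∈ zc ↔ ∀ y ∈ n1, ⁅x, y⁆ = (0 : N))
    -- the centre of 𝔫₁ is one-dimensional
    (c1 : Submodule F N)
    (hc1 : ∀ x : N, x ∈ c1 ↔ x ∈ n1 ∧ ∀ y ∈ n1, ⁅x, y⁆ = (0 : N))
    (hc1dim : Module.finrank F c1 = 1) :
    (∀ x : N, ∃ a ∈ n1, ∃ c ∈ zc, x = a + c) ∧
    (∀ x : N, (x ∈ n1 ∧ x ∈ zc) ↔ x ∈ z) := by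
  have lie_eq_zero_of_mem_center (x y : N) (hy : y ∈ z) : ⁅x, y⁆ = 0 := by
    rw [← lie_skew, (hz y).mp hy x, neg_zero]
  have hz_le_n1 : z ≤ n1 := fun x hx ↦ (hn1 x).mpr fun y ↦ (hz x).mp hx y ▸ z.zero_mem
  have hc1_eq : c1 = z := by
    refine (Submodule.eq_of_le_of_finrank_eq (fun x hx ↦ ?_) (hz1.trans hc1dim.symm)).symm
    exact (hc1 x).mpr ⟨hz_le_n1 hx, fun y _ ↦ (hz x).mp hx y⟩
  refine ⟨fun x ↦ ?_, fun x ↦ by rw [← hc1_eq, hc1, hzc]⟩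
  obtain ⟨a, ha, hxa⟩ :=
    LieAlgebra.exists_sub_lie_eq_zero_of_lie_mem_of_finrank_eq_one (I := n1.toSubmodule) hz1
      (fun x y hy ↦ by rw [← lie_skew]; exact z.neg_mem ((hn1 y).mp hy x))
      (fun c hc hc_comm x ↦ lie_eq_zero_of_mem_center x c (hc1_eq ▸ (hc1 c).mpr ⟨hc, hc_comm⟩)) x
  exact ⟨a, ha, x - a, (hzc _).mpr hxa, by abel⟩

/-- If a finite-dimensional nilpotent Lie algebra 𝔫 has
one-dimensional centre 𝔷, and the first term 𝔫₁ of the upper central series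
(the preimage in 𝔫 of the centre of 𝔫/𝔷) has one-dimensional centre, then
𝔫 = 𝔫₁ + z_𝔫(𝔫₁) and 𝔫₁ ∩ z_𝔫(𝔫₁) = 𝔷. -/
theorem nilpotent_sum_of_firstUpperCentral_centralizer
    (F : Type*) [Field F] [CharZero F]
    (N : Type*) [LieRing N] [LieAlgebra F N] [Module.Finite F N]
    [LieRing.IsNilpotent N]
    -- the centre 𝔷
    (z : Submodule F N) (hz : ∀ x : N, x ∈ z ↔ ∀ y : N, ⁅x, y⁆ = 0)
    (hz1 : Module.finrank F z = 1)
    -- 𝔫₁ : the preimage in 𝔫 of the centre of 𝔫/𝔷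
    (n1 : LieIdeal F N) (hn1 : ∀ x : N, x ∈ n1 ↔ ∀ y : N, ⁅x, y⁆ ∈ z)
    -- the centraliser z_𝔫(𝔫₁) of 𝔫₁ in 𝔫
    (zc : Submodule F N) (hzc : ∀ x : N, x ∈ zc ↔ ∀ y ∈ n1, ⁅x, y⁆ = (0 : N))
    -- the centre of 𝔫₁ is one-dimensional
    (c1 : Submodule F N)
    (hc1 : ∀ x : N, x ∈ c1 ↔ x ∈ n1 ∧ ∀ y ∈ n1, ⁅x, y⁆ = (0 : N))
    (hc1dim : Module.finrank F c1 = 1) :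
    (∀ x : N, ∃ a ∈ n1, ∃ c ∈ zc, x = a + c) ∧
    (∀ x : N, (x ∈ n1 ∧ x ∈ zc) ↔ x ∈ z) :=
  nilpotent_sum_of_firstUpperCentral_centralizer_general F N z hz hz1 n1 hn1 zc hzc c1 hc1 hc1dim
end

section
/- Let 𝔫 be a finite-dimensional nilpotent Lie algebra with one-dimensional center 𝔷, and let 𝔪 ⊆ 𝔫 be a subalgebra containing 𝔷 such that 𝔫/𝔷 is the direct sum of the two ideals 𝔪/𝔷 and z_𝔫(𝔪)/𝔷, where z_𝔫(𝔪) is the centralizer of 𝔪 in 𝔫, and suppose the center of 𝔫/𝔷 is contained in 𝔪/𝔷. Then z_𝔫(𝔪) = 𝔷, and hence 𝔫 = 𝔪. -/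
/-!
`z_𝔫(𝔪)` is an ideal of `𝔫`, and an element of it that is central modulo `𝔷` lies in
`𝔪 ∩ z_𝔫(𝔪) = 𝔷`. Climbing the upper central series of the nilpotent `𝔫`, which exhausts `𝔫`,
therefore puts all of `z_𝔫(𝔪)` into `𝔷`. Then `𝔫 = 𝔪 + z_𝔫(𝔪) = 𝔪 + 𝔷 = 𝔪`.
-/

namespace LieSubmodule

variable {R L M : Type*} [CommRing R] [LieRing L] [LieAlgebra R L] [AddCommGroup M] [Module R M]
  [LieRingModule L M] [LieModule R L M] {P : Submodule R M} {Q : LieSubmodule R L M}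

theorem inf_ucs_bot_le_of_forall_lie_mem_imp_mem
    (h : ∀ x ∈ Q, (∀ y : L, ⁅y, x⁆ ∈ P) → x ∈ P) (k : ℕ) :
    ((Q ⊓ (⊥ : LieSubmodule R L M).ucs k : LieSubmodule R L M) : Submodule R M) ≤ P := by
  induction k with
  | zero =>
    rintro x ⟨-, hx : x ∈ (⊥ : LieSubmodule R L M).ucs 0⟩
    rw [ucs_zero, mem_bot] at hx
    exact hx ▸ P.zero_mem
  | succ k ih =>
    rintro x ⟨hxQ, hx : x ∈ (⊥ : LieSubmodule R L M).ucs (k + 1)⟩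
    rw [ucs_succ, mem_normalizer] at hx
    exact h x hxQ fun y => ih ⟨Q.lie_mem hxQ, hx y⟩

theorem le_of_forall_lie_mem_imp_mem [LieModule.IsNilpotent L M]
    (h : ∀ x ∈ Q, (∀ y : L, ⁅y, x⁆ ∈ P) → x ∈ P) : (Q : Submodule R M) ≤ P := by
  obtain ⟨k, hk⟩ := (LieModule.isNilpotent_iff_exists_ucs_eq_top R).mp ‹_›
  intro x hx
  exact inf_ucs_bot_le_of_forall_lie_mem_imp_mem h k ⟨hx, hk ▸ mem_top x⟩

end LieSubmodule

theorem centralizer_eq_center_of_direct_sum_general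
    (F : Type*) [Field F]
    (N : Type*) [LieRing N] [LieAlgebra F N]
    [LieRing.IsNilpotent N]
    -- the centre 𝔷
    (z : Submodule F N)
    -- the subalgebra 𝔪 containing 𝔷
    (m : LieSubalgebra F N)
    -- the centraliser z_𝔫(𝔪)
    (zm : Submodule F N)
    -- 𝔪/𝔷 and z_𝔫(𝔪)/𝔷 are ideals of 𝔫/𝔷 ...
    (hzmIdeal : ∀ x : N, ∀ y ∈ zm, ⁅x, y⁆ ∈ zm)
    -- ... whose (direct) sum is 𝔫/𝔷
    (hsum : ∀ x : N, ∃ a ∈ m, ∃ c ∈ zm, x = a + c)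
    (hint : ∀ x : N, (x ∈ m ∧ x ∈ zm) ↔ x ∈ z)
    -- the centre of 𝔫/𝔷 is contained in 𝔪/𝔷
    (hcent : ∀ x : N, (∀ y : N, ⁅x, y⁆ ∈ z) → x ∈ m) :
    (∀ x : N, x ∈ zm ↔ x ∈ z) ∧ (∀ x : N, x ∈ m) := by
  let Z : LieSubmodule F N N := { zm with lie_mem := hzmIdeal _ _ }
  have hzm_le : zm ≤ z := LieSubmodule.le_of_forall_lie_mem_imp_mem (Q := Z) fun x hx hxz =>
    (hint x).mp ⟨hcent x fun y => by rw [← lie_skew]; exact neg_mem (hxz y), hx⟩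
  refine ⟨fun x => ⟨(hzm_le ·), fun hx => ((hint x).mpr hx).2⟩, fun x => ?_⟩
  obtain ⟨a, ha, c, hc, rfl⟩ := hsum x
  exact m.add_mem ha ((hint c).mpr (hzm_le hc)).1

/-- Let 𝔫 be a finite-dimensional nilpotent Lie algebra with
one-dimensional centre 𝔷 and 𝔪 ⊆ 𝔫 a subalgebra containing 𝔷 such that 𝔫/𝔷 is
the direct sum of the ideals 𝔪/𝔷 and z_𝔫(𝔪)/𝔷, and such that the centre of 𝔫/𝔷
is contained in 𝔪/𝔷.  Then z_𝔫(𝔪) = 𝔷 and 𝔫 = 𝔪. -/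
theorem centralizer_eq_center_of_direct_sum
    (F : Type*) [Field F] [CharZero F]
    (N : Type*) [LieRing N] [LieAlgebra F N] [Module.Finite F N]
    [LieRing.IsNilpotent N]
    -- the centre 𝔷
    (z : Submodule F N) (hz : ∀ x : N, x ∈ z ↔ ∀ y : N, ⁅x, y⁆ = 0)
    (hz1 : Module.finrank F z = 1)
    -- the subalgebra 𝔪 containing 𝔷
    (m : LieSubalgebra F N) (hzm : ∀ x ∈ z, x ∈ m)
    -- the centraliser z_𝔫(𝔪)
    (zm : Submodule F N) (hzmdef : ∀ x : N, x ∈ zm ↔ ∀ y ∈ m, ⁅x, y⁆ = (0 : N))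
    -- 𝔪/𝔷 and z_𝔫(𝔪)/𝔷 are ideals of 𝔫/𝔷 ...
    (hmIdeal : ∀ x : N, ∀ y ∈ m, ⁅x, y⁆ ∈ m)
    (hzmIdeal : ∀ x : N, ∀ y ∈ zm, ⁅x, y⁆ ∈ zm)
    -- ... whose (direct) sum is 𝔫/𝔷
    (hsum : ∀ x : N, ∃ a ∈ m, ∃ c ∈ zm, x = a + c)
    (hint : ∀ x : N, (x ∈ m ∧ x ∈ zm) ↔ x ∈ z)
    -- the centre of 𝔫/𝔷 is contained in 𝔪/𝔷
    (hcent : ∀ x : N, (∀ y : N, ⁅x, y⁆ ∈ z) → x ∈ m) :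
    (∀ x : N, x ∈ zm ↔ x ∈ z) ∧ (∀ x : N, x ∈ m) :=
  centralizer_eq_center_of_direct_sum_general F N z m zm hzmIdeal hsum hint hcent
end

section
/- Let 𝔤 be a finite-dimensional Lie algebra over a field of characteristic zero and fix a ∈ 𝔤*. For F, G invariant polynomials in S(𝔤)^𝔤 (i.e., {F, x} = 0 and {G, x} = 0 for all x ∈ 𝔤), all the directional derivatives ∂_a^k F and ∂_a^m G pairwise Poisson-commute with respect to the Kirillov bracket on S(𝔤): {∂_a^k F, ∂_a^m G} = 0 for all k, m ≥ 0. -/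
open MvPolynomial

variable {F : Type*} [Field F] [CharZero F]
variable {ι : Type*} [Fintype ι] [DecidableEq ι]
variable {g : Type*} [LieRing g] [LieAlgebra F g]

/-- The linear polynomial on 𝔤* corresponding to `v ∈ 𝔤` (in the coordinates
given by the basis `b`), i.e. the function ξ ↦ ξ(v). -/
noncomputable def linPoly (b : Module.Basis ι F g) (v : g) : MvPolynomial ι F :=
  ∑ i, MvPolynomial.C (b.repr v i) * MvPolynomial.X i

/-- The Kirillov Poisson bracket on S(𝔤) = F[𝔤*]:
{f,p}(ξ) = ξ([d_ξ f, d_ξ p]) = ∑ᵢⱼ ∂ᵢf ∂ⱼp · ξ(⁅bᵢ,bⱼ⁆). -/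
noncomputable def kirillovBracket (b : Module.Basis ι F g) (f p : MvPolynomial ι F) :
    MvPolynomial ι F :=
  ∑ i, ∑ j, pderiv i f * pderiv j p * linPoly b ⁅b i, b j⁆

/-- The directional derivative ∂_a on S(𝔤) in the direction a ∈ 𝔤*. -/
noncomputable def dirDeriv (b : Module.Basis ι F g) (a : Module.Dual F g)
    (f : MvPolynomial ι F) : MvPolynomial ι F :=
  ∑ i, a (b i) • pderiv i f

/-!
Write `{f, p}_a = a([d f, d p])` for the Kirillov bracket with its argument frozen at `a`.
The derivation `∂_a` commutes with the partial derivatives and maps the coefficient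
`ξ([bᵢ, bⱼ])` of the Kirillov bracket to the constant `a([bᵢ, bⱼ])`, so
`∂_a {f, p} = {∂_a f, p} + {f, ∂_a p} + {f, p}_a`. An invariant `H` is a Casimir
(`{H, p} = 0` for all `p`), and differentiating this repeatedly gives
`{∂_a^(k+1) H, p} = -(k+1) {∂_a^k H, p}_a`. Consequently
`(k+1) {∂_a^k F, ∂_a^m G}_a = {∂_a^m G, ∂_a^(k+1) F}`, which is `0` for `m = 0` and
`(m'+1) {∂_a^(k+1) F, ∂_a^m' G}_a` for `m = m'+1`; so induction on `m` (dividing by `k+1` in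
characteristic zero) kills every frozen bracket, hence every Kirillov bracket.
-/

namespace MvPolynomial

variable {R σ : Type*} [CommRing R]

theorem pderiv_pderiv_comm (i j : σ) (f : MvPolynomial σ R) :
    pderiv i (pderiv j f) = pderiv j (pderiv i f) := by
  classical
  have : ⁅pderiv i, pderiv j⁆ = (0 : Derivation R (MvPolynomial σ R) (MvPolynomial σ R)) :=
    derivation_ext fun k => by
      rw [Derivation.commutator_apply]
      simp [pderiv_X, Pi.single_apply, apply_ite]
  rw [← sub_eq_zero, ← Derivation.commutator_apply, this, Derivation.zero_apply]

variable [Fintype σ]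

noncomputable def matrixBracket (L : σ → σ → MvPolynomial σ R) (f p : MvPolynomial σ R) :
    MvPolynomial σ R :=
  ∑ i, ∑ j, pderiv i f * pderiv j p * L i j

variable {L : σ → σ → MvPolynomial σ R}

theorem matrixBracket_antisymm (hL : ∀ i j, L i j = -L j i) (f p : MvPolynomial σ R) :
    matrixBracket L f p = -matrixBracket L p f := by
  rw [matrixBracket, matrixBracket, Finset.sum_comm, ← Finset.sum_neg_distrib]
  refine Finset.sum_congr rfl fun i _ => ?_
  rw [← Finset.sum_neg_distrib]
  refine Finset.sum_congr rfl fun j _ => ?_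
  rw [hL]
  ring

theorem matrixBracket_X_right (f : MvPolynomial σ R) (j : σ) :
    matrixBracket L f (X j) = ∑ i, pderiv i f * L i j := by
  classical
  simp [matrixBracket, pderiv_X, Pi.single_apply]

theorem matrixBracket_eq_sum_X_right (f p : MvPolynomial σ R) :
    matrixBracket L f p = ∑ j, matrixBracket L f (X j) * pderiv j p := by
  simp only [matrixBracket_X_right, Finset.sum_mul]
  rw [matrixBracket, Finset.sum_comm]
  exact Finset.sum_congr rfl fun j _ => Finset.sum_congr rfl fun i _ => by ring

theorem _root_.Derivation.map_matrixBracket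
    (D : Derivation R (MvPolynomial σ R) (MvPolynomial σ R))
    (hD : ∀ i f, D (pderiv i f) = pderiv i (D f)) (f p : MvPolynomial σ R) :
    D (matrixBracket L f p) =
      matrixBracket L (D f) p + matrixBracket L f (D p) +
        matrixBracket (fun i j => D (L i j)) f p := by
  simp only [matrixBracket, map_sum, Derivation.leibniz, smul_eq_mul, hD,
    ← Finset.sum_add_distrib]
  exact Finset.sum_congr rfl fun i _ => Finset.sum_congr rfl fun j _ => by ring

end MvPolynomial

section ArgumentShift

variable {K σ 𝔤 : Type*} [Field K] [Fintype σ] [LieRing 𝔤] [LieAlgebra K 𝔤]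
variable (b : Module.Basis σ K 𝔤) (a : Module.Dual K 𝔤)

noncomputable def frozenBracket (f p : MvPolynomial σ K) : MvPolynomial σ K :=
  matrixBracket (fun i j => C (a ⁅b i, b j⁆)) f p

theorem kirillovBracket_eq_matrixBracket :
    kirillovBracket b = matrixBracket fun i j => linPoly b ⁅b i, b j⁆ :=
  rfl

theorem linPoly_basis (j : σ) : linPoly b (b j) = X j := by
  classical
  simp [linPoly, Finsupp.single_apply]

theorem pderiv_linPoly (v : 𝔤) (i : σ) : pderiv i (linPoly b v) = C (b.repr v i) := by
  classical
  simp [linPoly, pderiv_X, Pi.single_apply]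

theorem kirillovBracket_antisymm (f p : MvPolynomial σ K) :
    kirillovBracket b f p = -kirillovBracket b p f := by
  refine matrixBracket_antisymm (fun i j => ?_) f p
  rw [← lie_skew (b j) (b i)]
  simp only [linPoly, map_neg, Finsupp.neg_apply, neg_mul, Finset.sum_neg_distrib, neg_neg]

theorem frozenBracket_antisymm (f p : MvPolynomial σ K) :
    frozenBracket b a f p = -frozenBracket b a p f :=
  matrixBracket_antisymm (fun i j => by rw [← lie_skew, map_neg, map_neg]) f p

noncomputable def dirDerivation : Derivation K (MvPolynomial σ K) (MvPolynomial σ K) :=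
  ∑ i, a (b i) • pderiv i

theorem coe_dirDerivation : ⇑(dirDerivation b a) = dirDeriv b a := by
  ext1 f
  rw [dirDerivation, ← Derivation.coeFnAddMonoidHom_apply, map_sum]
  simp [dirDeriv, Derivation.coeFnAddMonoidHom_apply]

theorem dirDerivation_pderiv (i : σ) (f : MvPolynomial σ K) :
    dirDerivation b a (pderiv i f) = pderiv i (dirDerivation b a f) := by
  simp [coe_dirDerivation, dirDeriv, pderiv_pderiv_comm i]

theorem dirDerivation_linPoly (v : 𝔤) : dirDerivation b a (linPoly b v) = C (a v) := by
  have hav : a v = ∑ i, a (b i) * b.repr v i := by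
    conv_lhs => rw [← b.sum_repr v, map_sum]
    simp only [map_smul, smul_eq_mul, mul_comm]
  simp only [coe_dirDerivation, dirDeriv, pderiv_linPoly, smul_eq_C_mul, ← map_mul, ← map_sum,
    hav]

theorem dirDerivation_kirillovBracket (f p : MvPolynomial σ K) :
    dirDerivation b a (kirillovBracket b f p) =
      kirillovBracket b (dirDerivation b a f) p + kirillovBracket b f (dirDerivation b a p) +
        frozenBracket b a f p := by
  simp only [kirillovBracket_eq_matrixBracket,
    Derivation.map_matrixBracket _ (dirDerivation_pderiv b a), dirDerivation_linPoly]
  rfl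

theorem dirDerivation_frozenBracket (f p : MvPolynomial σ K) :
    dirDerivation b a (frozenBracket b a f p) =
      frozenBracket b a (dirDerivation b a f) p + frozenBracket b a f (dirDerivation b a p) := by
  simp only [frozenBracket]
  rw [Derivation.map_matrixBracket _ (dirDerivation_pderiv b a), add_eq_left]
  simp [matrixBracket]

variable {b a}

theorem kirillovBracket_eq_zero_of_forall_linPoly {H : MvPolynomial σ K}
    (hH : ∀ x : 𝔤, kirillovBracket b H (linPoly b x) = 0) (p : MvPolynomial σ K) :
    kirillovBracket b H p = 0 := by
  rw [kirillovBracket_eq_matrixBracket, matrixBracket_eq_sum_X_right]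
  refine Finset.sum_eq_zero fun j _ => ?_
  rw [← linPoly_basis b j, ← kirillovBracket_eq_matrixBracket, hH, zero_mul]

theorem kirillovBracket_iterate_dirDerivation_succ {H : MvPolynomial σ K}
    (hH : ∀ p, kirillovBracket b H p = 0) (k : ℕ) (p : MvPolynomial σ K) :
    kirillovBracket b ((dirDerivation b a)^[k + 1] H) p =
      -((k + 1 : K) • frozenBracket b a ((dirDerivation b a)^[k] H) p) := by
  induction k generalizing p with
  | zero =>
    have h := congrArg (dirDerivation b a) (hH p)
    rw [dirDerivation_kirillovBracket, hH, map_zero] at h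
    simpa [eq_neg_iff_add_eq_zero] using h
  | succ k ih =>
    have h := congrArg (dirDerivation b a) (ih p)
    rw [map_neg, Derivation.map_smul, dirDerivation_kirillovBracket,
      dirDerivation_frozenBracket, ih] at h
    simp only [← Function.iterate_succ_apply' (dirDerivation b a)] at h
    push_cast
    linear_combination (norm := module) h

theorem frozenBracket_iterate_dirDerivation_eq_zero [CharZero K] {Fp Gp : MvPolynomial σ K}
    (hF : ∀ p, kirillovBracket b Fp p = 0) (hG : ∀ p, kirillovBracket b Gp p = 0) (m k : ℕ) :
    frozenBracket b a ((dirDerivation b a)^[k] Fp) ((dirDerivation b a)^[m] Gp) = 0 := by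
  have of_kirillovBracket : ∀ k m : ℕ,
      kirillovBracket b ((dirDerivation b a)^[m] Gp) ((dirDerivation b a)^[k + 1] Fp) = 0 →
        frozenBracket b a ((dirDerivation b a)^[k] Fp) ((dirDerivation b a)^[m] Gp) = 0 := by
    intro k m h
    rw [kirillovBracket_antisymm, kirillovBracket_iterate_dirDerivation_succ hF, neg_neg,
      smul_eq_zero] at h
    exact h.resolve_left (Nat.cast_add_one_ne_zero k)
  induction m generalizing k with
  | zero => exact of_kirillovBracket k 0 (hG _)
  | succ m ih =>
    refine of_kirillovBracket k (m + 1) ?_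
    rw [kirillovBracket_iterate_dirDerivation_succ hG, frozenBracket_antisymm, ih, neg_zero,
      smul_zero, neg_zero]

end ArgumentShift

/-- argument shift method: if F, G are invariants of the
coadjoint representation (i.e. {F,x} = 0 = {G,x} for all x ∈ 𝔤), then all
directional derivatives ∂_a^k F, ∂_a^m G pairwise Poisson-commute. -/
theorem shifts_of_invariants_poisson_commute
    (b : Module.Basis ι F g) (a : Module.Dual F g)
    (Fp Gp : MvPolynomial ι F)
    (hF : ∀ x : g, kirillovBracket b Fp (linPoly b x) = 0)
    (hG : ∀ x : g, kirillovBracket b Gp (linPoly b x) = 0) :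
    ∀ k m : ℕ,
      kirillovBracket b ((dirDeriv b a)^[k] Fp) ((dirDeriv b a)^[m] Gp) = 0 := by
  have hF' := kirillovBracket_eq_zero_of_forall_linPoly hF
  have hG' := kirillovBracket_eq_zero_of_forall_linPoly hG
  rw [← coe_dirDerivation]
  rintro (_ | k) m
  · exact hF' _
  · rw [kirillovBracket_iterate_dirDerivation_succ hF',
      frozenBracket_iterate_dirDerivation_eq_zero hF' hG', smul_zero, neg_zero]
end

section
/- Let 𝔤 be a finite-dimensional Lie algebra over a field F of characteristic zero whose nilpotent radical 𝔫 is a Heisenberg algebra with center 𝔷 = [𝔫,𝔫] contained in the center of 𝔤. Fix a Levi decomposition 𝔤 = 𝔩 ⊕ 𝔫 and an 𝔩-invariant complement V of 𝔷 in 𝔫. For nonzero α ∈ 𝔷*, set Y_α = {γ ∈ 𝔤* : γ|_𝔷 = α} and S_α = {γ ∈ 𝔤* : γ(V)=0, γ|_𝔷 = α}. Then for every γ ∈ Y_α, the orbit of γ under the coadjoint action of the Heisenberg group N intersects S_α in exactly one point. -/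
/-!
Write `T_η γ = γ ∘ (1 + ad η + ½ (ad η)²)`. Since the centre `F·z` acts trivially, `T_η` only
depends on the `V`-component of `η`, and for `η ∈ V` the double brackets `⁅η, ⁅η, v⁆⁆`, `v ∈ V`,
vanish, so `T_η γ` kills `V` exactly when `γ ⁅η, v⁆ = -γ v` for all `v ∈ V`. Because `γ z ≠ 0`,
the form `(u, v) ↦ γ ⁅u, v⁆` on `V` is the (nondegenerate) Heisenberg pairing up to the factor
`γ z`, so `V → V*` is an isomorphism and this equation has exactly one solution `η ∈ V`.
-/

open LieAlgebra

section TwoStepCoadjoint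

variable {F : Type*} [Field F] {g : Type*} [LieRing g] [LieAlgebra F g]

/-- The coadjoint action of `exp η` when `(ad η)³` acts trivially on the functionals considered,
as in a two-step nilpotent ideal whose centre is central in `g`. -/
def truncatedCoadjointExp (γ : Module.Dual F g) (η : g) : Module.Dual F g :=
  γ ∘ₗ (LinearMap.id + ad F g η + (2 : F)⁻¹ • (ad F g η ∘ₗ ad F g η))

@[simp]
theorem truncatedCoadjointExp_apply (γ : Module.Dual F g) (η x : g) :
    truncatedCoadjointExp γ η x = γ x + γ ⁅η, x⁆ + (2 : F)⁻¹ * γ ⁅η, ⁅η, x⁆⁆ := by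
  simp [truncatedCoadjointExp]

theorem truncatedCoadjointExp_add_of_lie_eq_zero (γ : Module.Dual F g) (η : g) {w : g}
    (hw : ∀ x : g, ⁅x, w⁆ = 0) :
    truncatedCoadjointExp γ (η + w) = truncatedCoadjointExp γ η := by
  have hw' : ∀ x : g, ⁅w, x⁆ = 0 := fun x ↦ by rw [← lie_skew, hw, neg_zero]
  ext x
  simp only [truncatedCoadjointExp_apply, add_lie, hw', add_zero]

theorem lie_lie_eq_zero_of_eq_smul {z : g} (hz : ∀ x : g, ⁅x, z⁆ = 0) {a b : g} {t : F}
    (h : ⁅a, b⁆ = t • z) (c : g) : ⁅c, ⁅a, b⁆⁆ = 0 := by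
  rw [h, lie_smul, hz, smul_zero]

def bracketPairing (γ : Module.Dual F g) (V : Submodule F g) : V →ₗ[F] V →ₗ[F] F :=
  ((ad F g : g →ₗ[F] Module.End F g).compr₂ γ).compl₁₂ V.subtype V.subtype

@[simp]
theorem bracketPairing_apply (γ : Module.Dual F g) (V : Submodule F g) (u v : V) :
    bracketPairing γ V u v = γ ⁅(u : g), (v : g)⁆ :=
  rfl

variable {γ : Module.Dual F g} {V : Submodule F g} {z : g}

theorem bracketPairing_injective (hγ : γ z ≠ 0)
    (hbr : ∀ v ∈ V, ∀ w ∈ V, ∃ t : F, ⁅v, w⁆ = t • z)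
    (hnondeg : ∀ v ∈ V, v ≠ 0 → ∃ w ∈ V, ⁅v, w⁆ ≠ (0 : g)) :
    Function.Injective (bracketPairing γ V) := by
  rw [injective_iff_map_eq_zero]
  intro u hu
  by_contra hu0
  obtain ⟨w, hw, hlie⟩ := hnondeg u u.2 (by exact_mod_cast hu0)
  obtain ⟨t, ht⟩ := hbr u u.2 w hw
  have hγuw : γ ⁅(u : g), w⁆ = 0 := LinearMap.congr_fun hu ⟨w, hw⟩
  rw [ht, map_smul, smul_eq_mul, mul_eq_zero] at hγuw
  exact hlie (by rw [ht, hγuw.resolve_right hγ, zero_smul])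

theorem bracketPairing_bijective [FiniteDimensional F V] (hγ : γ z ≠ 0)
    (hbr : ∀ v ∈ V, ∀ w ∈ V, ∃ t : F, ⁅v, w⁆ = t • z)
    (hnondeg : ∀ v ∈ V, v ≠ 0 → ∃ w ∈ V, ⁅v, w⁆ ≠ (0 : g)) :
    Function.Bijective (bracketPairing γ V) := by
  have hinj := bracketPairing_injective hγ hbr hnondeg
  exact ⟨hinj, (LinearMap.injective_iff_surjective_of_finrank_eq_finrank
    Subspace.dual_finrank_eq.symm).mp hinj⟩

theorem truncatedCoadjointExp_vanishes_on_iff (hz : ∀ x : g, ⁅x, z⁆ = 0)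
    (hbr : ∀ v ∈ V, ∀ w ∈ V, ∃ t : F, ⁅v, w⁆ = t • z) (η : V) :
    (∀ v ∈ V, truncatedCoadjointExp γ η v = 0) ↔
      bracketPairing γ V η = -(γ ∘ₗ V.subtype) := by
  have hquad : ∀ v ∈ V, ⁅(η : g), ⁅(η : g), v⁆⁆ = 0 := fun v hv ↦
    (hbr η η.2 v hv).elim fun _ ht ↦ lie_lie_eq_zero_of_eq_smul hz ht η
  simp only [LinearMap.ext_iff, Subtype.forall, truncatedCoadjointExp_apply, bracketPairing_apply,
    LinearMap.neg_apply, LinearMap.comp_apply, Submodule.subtype_apply]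
  refine forall₂_congr fun v hv ↦ ?_
  rw [hquad v hv, map_zero, mul_zero, add_zero, add_comm, add_eq_zero_iff_eq_neg]

end TwoStepCoadjoint

theorem heisenberg_orbit_meets_section_uniquely_general
    (F : Type*) [Field F]
    (g : Type*) [LieRing g] [LieAlgebra F g] [Module.Finite F g]
    (n : LieIdeal F g)
    -- Heisenberg structure: z spans [𝔫,𝔫] and is central in 𝔤
    (z : g)
    (hzcentral : ∀ x : g, ⁅x, z⁆ = (0 : g))
    (hbr : ∀ x ∈ n, ∀ y ∈ n, ∃ t : F, ⁅x, y⁆ = t • z)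
    -- V : complement of 𝔷 = F·z in 𝔫, with nondegenerate induced pairing
    (V : Submodule F g) (hVn : V ≤ (n : Submodule F g))
    (hcompl : V ⊔ Submodule.span F {z} = (n : Submodule F g))
    (hnondeg : ∀ v ∈ V, v ≠ 0 → ∃ w ∈ V, ⁅v, w⁆ ≠ (0 : g))
    -- nonzero α ∈ 𝔷*
    (c : F) (hc : c ≠ 0) :
    ∀ γ : Module.Dual F g, γ z = c →
      ∃! δ : Module.Dual F g,
        (∃ η ∈ n, δ = γ.comp (LinearMap.id
            + (LieAlgebra.ad F g η)
            + (2 : F)⁻¹ • ((LieAlgebra.ad F g η) ∘ₗ (LieAlgebra.ad F g η)))) ∧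
        (∀ v ∈ V, δ v = 0) ∧ δ z = c := by
  intro γ hγ
  have hbrV : ∀ v ∈ V, ∀ w ∈ V, ∃ t : F, ⁅v, w⁆ = t • z :=
    fun v hv w hw ↦ hbr v (hVn hv) w (hVn hw)
  have hγz : γ z ≠ 0 := hγ ▸ hc
  have hpair := bracketPairing_bijective hγz hbrV hnondeg
  obtain ⟨η, hη⟩ := hpair.2 (-(γ ∘ₗ V.subtype))
  refine ⟨truncatedCoadjointExp γ η, ⟨⟨η, hVn η.2, rfl⟩,
    (truncatedCoadjointExp_vanishes_on_iff hzcentral hbrV η).2 hη, by simp [hzcentral, hγ]⟩, ?_⟩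
  rintro _ ⟨⟨η', hη', rfl⟩, hvanish, -⟩
  obtain ⟨v, hv, _, hw, rfl⟩ := Submodule.mem_sup.1 (hcompl ▸ hη' : η' ∈ V ⊔ F ∙ z)
  obtain ⟨s, rfl⟩ := Submodule.mem_span_singleton.1 hw
  have hsz : ∀ x : g, ⁅x, s • z⁆ = 0 := fun x ↦ by rw [lie_smul, hzcentral, smul_zero]
  change ∀ x ∈ V, truncatedCoadjointExp γ (v + s • z) x = 0 at hvanish
  change truncatedCoadjointExp γ (v + s • z) = _
  rw [truncatedCoadjointExp_add_of_lie_eq_zero γ v hsz] at hvanish ⊢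
  have hvη : (⟨v, hv⟩ : V) = η :=
    hpair.1 (((truncatedCoadjointExp_vanishes_on_iff hzcentral hbrV ⟨v, hv⟩).1 hvanish).trans hη.symm)
  rw [← hvη]

/-- Suppose the nilpotent radical 𝔫 of 𝔤 is a Heisenberg
algebra whose centre 𝔷 = F·z is central in 𝔤, with a Levi decomposition
𝔤 = 𝔩 ⊕ 𝔫 and an 𝔩-invariant complement V of 𝔷 in 𝔫.  For a nonzero
α ∈ 𝔷* (encoded by c = α(z) ≠ 0), every coadjoint N-orbit of a point of
Y_α = {γ : γ(z) = c} meets S_α = {γ : γ(V) = 0, γ(z) = c} in exactly one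
point.  (Since N is two-step nilpotent with centre acting trivially, the
coadjoint action of exp η is γ ∘ (1 + ad η + ½ (ad η)²).) -/
theorem heisenberg_orbit_meets_section_uniquely
    (F : Type*) [Field F] [CharZero F]
    (g : Type*) [LieRing g] [LieAlgebra F g] [Module.Finite F g]
    (n : LieIdeal F g)
    -- 𝔫 is the nilpotent radical
    [LieModule.IsNilpotent n n]
    (hnilrad : ∀ I : LieIdeal F g, LieModule.IsNilpotent I I → I ≤ n)
    -- Heisenberg structure: z spans [𝔫,𝔫] and is central in 𝔤
    (z : g) (hzn : z ∈ n)
    (hzcentral : ∀ x : g, ⁅x, z⁆ = (0 : g))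
    (hbr : ∀ x ∈ n, ∀ y ∈ n, ∃ t : F, ⁅x, y⁆ = t • z)
    -- V : complement of 𝔷 = F·z in 𝔫, with nondegenerate induced pairing
    (V : Submodule F g) (hVn : V ≤ (n : Submodule F g))
    (hcompl : V ⊔ Submodule.span F {z} = (n : Submodule F g))
    (hdisj : V ⊓ Submodule.span F {z} = ⊥)
    (hnondeg : ∀ v ∈ V, v ≠ 0 → ∃ w ∈ V, ⁅v, w⁆ ≠ (0 : g))
    -- Levi decomposition 𝔤 = 𝔩 ⊕ 𝔫 with V 𝔩-invariant
    (l : LieSubalgebra F g)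
    (hlevi : IsCompl (l : Submodule F g) (n : Submodule F g))
    (hVinv : ∀ x ∈ l, ∀ v ∈ V, ⁅x, v⁆ ∈ V)
    -- nonzero α ∈ 𝔷*
    (c : F) (hc : c ≠ 0) :
    ∀ γ : Module.Dual F g, γ z = c →
      ∃! δ : Module.Dual F g,
        (∃ η ∈ n, δ = γ.comp (LinearMap.id
            + (LieAlgebra.ad F g η)
            + (2 : F)⁻¹ • ((LieAlgebra.ad F g η) ∘ₗ (LieAlgebra.ad F g η)))) ∧
        (∀ v ∈ V, δ v = 0) ∧ δ z = c :=
  heisenberg_orbit_meets_section_uniquely_general F g n z hzcentral hbr V hVn hcompl hnondeg c hc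
end

section
/- Let 𝔤 be a finite-dimensional Lie algebra with a commutative ideal 𝔥, let α ∈ 𝔥* and 𝔤_α = {ξ ∈ 𝔤 : α([ξ,𝔥]) = 0}. Choose α̃ ∈ 𝔤_α* with α̃|_𝔥 = α. Then the formula [ξ+𝔥, η+𝔥] := ([ξ,η]+𝔥) + α̃([ξ,η])·w defines a Lie algebra structure on (𝔤_α/𝔥) ⊕ F·w with w central, i.e., a one-dimensional central extension of 𝔤_α/𝔥 by the 2-cocycle c(ξ+𝔥, η+𝔥) = α̃([ξ,η]); in particular c is a well-defined skew-symmetric 2-cocycle on 𝔤_α/𝔥. -/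
/-- For a commutative ideal 𝔥 of 𝔤, α ∈ 𝔥*,
𝔤_α = {ξ : α([ξ,𝔥]) = 0} and α̃ extending α, the formula
c(ξ+𝔥, η+𝔥) = α̃([ξ,η]) is a well-defined skew-symmetric 2-cocycle on
𝔤_α/𝔥, so that [ξ+𝔥, η+𝔥] := ([ξ,η]+𝔥) + c(ξ,η)·w defines a Lie algebra
structure on (𝔤_α/𝔥) ⊕ F·w with w central (a one-dimensional central
extension of 𝔤_α/𝔥).  Formally: 𝔤_α is closed under the bracket, c vanishes
when one argument lies in 𝔥 (well-definedness on the quotient), c is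
skew-symmetric, and c satisfies the 2-cocycle identity. -/
theorem central_extension_cocycle
    (F : Type*) [Field F] [CharZero F]
    (g : Type*) [LieRing g] [LieAlgebra F g] [Module.Finite F g]
    (h : LieIdeal F g)
    (hcomm : ∀ x ∈ h, ∀ y ∈ h, ⁅x, y⁆ = (0 : g))
    (α : Module.Dual F g)     -- extension to 𝔤 of α ∈ 𝔥*
    (αt : Module.Dual F g)    -- α̃, another extension of α
    (hαt : ∀ x ∈ h, αt x = α x) :
    -- 𝔤_α is closed under the bracket, so the formula makes sense
    (∀ ξ η : g, (∀ x ∈ h, α ⁅ξ, x⁆ = 0) → (∀ x ∈ h, α ⁅η, x⁆ = 0) →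
      (∀ x ∈ h, α ⁅⁅ξ, η⁆, x⁆ = 0)) ∧
    -- c is well defined on 𝔤_α/𝔥 : it vanishes if one argument is in 𝔥
    (∀ ξ : g, (∀ x ∈ h, α ⁅ξ, x⁆ = 0) → ∀ x ∈ h, αt ⁅ξ, x⁆ = 0) ∧
    -- c is skew-symmetric
    (∀ ξ η : g, αt ⁅ξ, η⁆ = - αt ⁅η, ξ⁆) ∧
    -- the 2-cocycle identity
    (∀ ξ η ζ : g, (∀ x ∈ h, α ⁅ξ, x⁆ = 0) → (∀ x ∈ h, α ⁅η, x⁆ = 0) →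
      (∀ x ∈ h, α ⁅ζ, x⁆ = 0) →
      αt ⁅⁅ξ, η⁆, ζ⁆ + αt ⁅⁅η, ζ⁆, ξ⁆ + αt ⁅⁅ζ, ξ⁆, η⁆ = 0) := by
  refine ⟨?_, ?_, ?_, ?_⟩
  · intro ξ η hξ hη x hx
    have : ⁅⁅ξ, η⁆, x⁆ = ⁅ξ, ⁅η, x⁆⁆ - ⁅η, ⁅ξ, x⁆⁆ := by
      rw [lie_lie]
    rw [this, map_sub, hξ _ (lie_mem_right F g h η x hx),
      hη _ (lie_mem_right F g h ξ x hx), sub_zero]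
  · intro ξ hξ x hx
    rw [hαt _ (lie_mem_right F g h ξ x hx)]
    exact hξ x hx
  · intro ξ η
    rw [← lie_skew, map_neg]
  · intro ξ η ζ _ _ _
    have : ⁅⁅ξ, η⁆, ζ⁆ + ⁅⁅η, ζ⁆, ξ⁆ + ⁅⁅ζ, ξ⁆, η⁆ = 0 := by
      have j := lie_jacobi ξ η ζ
      simp only [lie_lie, ← lie_skew ξ ζ, ← lie_skew η ξ, ← lie_skew ζ η, lie_neg]
      abel_nf
      abel_nf at j
      rw [← smul_add, ← smul_add, j, smul_zero]
    rw [← map_add, ← map_add, this, map_zero]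
end
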